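/- arXiv:1401.6734 — 4 statements merged into one kernel-verified Lean document; each statement's English description precedes it below -/
import Mathlib

section
/- Let k ≥ 2, m, t be positive integers with t > k. Consider an edge-coloring c of the complete k-uniform hypergraph on n = 4·m·t^(2k-1) vertices (i.e., a function c from the k-element subsets of an n-element vertex set V to some color set) which is m-good, meaning that for every (k-1)-element subset S of V and every color γ, the number of k-element sets e containing S with c(e) = γ is at most m. Then there exists a subset T of V with |T| ≥ t such that all k-element subsets of T receive pairwise distinct colors under c. -/
/-!
Average over the `2t`-subsets `A` of `V` the number of ordered pairs `(e₁, e₂)` of distinct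
`k`-subsets of `A` with `c e₁ = c e₂`. Charge such a pair to each `y ∈ e₂ \ e₁`: it is then
recorded by `e₁` and `e₂.erase y`, both inside the `(2t-1)`-set `B = A.erase y`, while `y` runs
over `Bᶜ`; for fixed `(e₁, e₂.erase y)` the `m`-good condition leaves at most `m` choices of `y`.
Hence the average is at most `2t · m C(2t-1,k) C(2t-1,k-1) / (N - 2t + 1) ≤ 2t` when
`N = 4 m t^(2k-1)`. So some `A` contains at most `t` unordered such pairs, and deleting one
vertex of `e₁ ∆ e₂` for each of them leaves a rainbow set of size at least `t`.
-/

open Finset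
open scoped symmDiff

theorem two_pow_mul_choose_succ_le_pow (n k : ℕ) : 2 ^ k * n.choose (k + 1) ≤ n ^ (k + 1) := by
  induction k with
  | zero => simp
  | succ k ih =>
    have hstep : 2 * n.choose (k + 2) ≤ n.choose (k + 1) * n := by
      calc 2 * n.choose (k + 2) ≤ (k + 2) * n.choose (k + 2) := by gcongr; omega
        _ = n.choose (k + 1) * (n - (k + 1)) := by rw [mul_comm, Nat.choose_succ_right_eq]
        _ ≤ n.choose (k + 1) * n := by gcongr; omega
    calc 2 ^ (k + 1) * n.choose (k + 2) = 2 ^ k * (2 * n.choose (k + 2)) := by ring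
      _ ≤ 2 ^ k * n.choose (k + 1) * n := by rw [mul_assoc]; gcongr
      _ ≤ n ^ (k + 1) * n := by gcongr
      _ = n ^ (k + 2) := by ring

theorem pow_add_two_pow_mul_le_succ_pow (n i : ℕ) :
    n ^ (i + 2) + 2 ^ (i + 1) * n ≤ (n + 1) ^ (i + 2) := by
  induction i with
  | zero => ring_nf; linarith
  | succ i ih =>
    have hn : 2 ^ (i + 1) * n ≤ 2 ^ (i + 1) * n ^ 2 := by gcongr; nlinarith
    calc n ^ (i + 3) + 2 ^ (i + 2) * n ≤ (n + 1) * (n ^ (i + 2) + 2 ^ (i + 1) * n) := by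
          ring_nf; ring_nf at hn; linarith [Nat.zero_le (n ^ 2 * n ^ i)]
      _ ≤ (n + 1) * (n + 1) ^ (i + 2) := by gcongr
      _ = (n + 1) ^ (i + 3) := by ring

theorem choose_mul_choose_pred_add_le {k t : ℕ} (hk : 2 ≤ k) (ht : 0 < t) :
    (2 * t - 1).choose k * (2 * t - 1).choose (k - 1) + (2 * t - 1) ≤ 4 * t ^ (2 * k - 1) := by
  obtain ⟨j, rfl⟩ := Nat.exists_eq_add_of_le' hk
  obtain ⟨n, hn⟩ : ∃ n, 2 * t = n + 1 := ⟨2 * t - 1, by omega⟩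
  rw [show 2 * t - 1 = n by omega, show j + 2 - 1 = j + 1 by omega,
    show 2 * (j + 2) - 1 = 2 * j + 3 by omega]
  have h₁ := two_pow_mul_choose_succ_le_pow n (j + 1)
  have h₂ := two_pow_mul_choose_succ_le_pow n j
  have h₃ := pow_add_two_pow_mul_le_succ_pow n (2 * j + 1)
  refine Nat.le_of_mul_le_mul_left ?_ (show 0 < 2 ^ (2 * j + 1) by positivity)
  calc 2 ^ (2 * j + 1) * (n.choose (j + 2) * n.choose (j + 1) + n)
      = (2 ^ (j + 1) * n.choose (j + 2)) * (2 ^ j * n.choose (j + 1)) + 2 ^ (2 * j + 1) * n := by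
        ring
    _ ≤ n ^ (j + 2) * n ^ (j + 1) + 2 ^ (2 * j + 2) * n :=
        Nat.add_le_add (Nat.mul_le_mul h₁ h₂) (by gcongr <;> omega)
    _ = n ^ (2 * j + 3) + 2 ^ (2 * j + 2) * n := by ring
    _ ≤ (n + 1) ^ (2 * j + 3) := h₃
    _ = 2 ^ (2 * j + 1) * (4 * t ^ (2 * j + 3)) := by rw [← hn]; ring

theorem two_mul_card_image_le_of_swap {α β : Type*} [DecidableEq α] [DecidableEq β]
    {s : Finset (α × α)} {f : α × α → β} (hswap : ∀ p ∈ s, p.swap ∈ s)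
    (hne : ∀ p ∈ s, p.1 ≠ p.2) (hf : ∀ p, f p.swap = f p) :
    2 * #(s.image f) ≤ #s := by
  refine mul_card_image_le_card s 2 fun b hb => ?_
  obtain ⟨p, hp, rfl⟩ := mem_image.1 hb
  have hp_swap : p ≠ p.swap := fun h => hne p hp (congrArg Prod.fst h)
  calc 2 = #{p, p.swap} := (card_pair hp_swap).symm
    _ ≤ #{q ∈ s | f q = f p} :=
      card_le_card (by simp [insert_subset_iff, hp, hswap p hp, hf])

theorem exists_transversal_card_le {α : Type*} [DecidableEq α] (F : Finset (Finset α))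
    (hF : ∀ u ∈ F, u.Nonempty) : ∃ D : Finset α, #D ≤ #F ∧ ∀ u ∈ F, ∃ v ∈ D, v ∈ u :=
  ⟨F.attach.image fun u => (hF u.1 u.2).choose, card_image_le.trans card_attach.le,
    fun u hu => ⟨_, mem_image_of_mem _ (mem_attach _ ⟨u, hu⟩), (hF u hu).choose_spec⟩⟩

section Coloring

variable {V C : Type*} [DecidableEq V] [DecidableEq C]

def IsGoodColoring [Fintype V] (c : Finset V → C) (k m : ℕ) : Prop :=
  ∀ S : Finset V, #S = k - 1 → ∀ γ : C, #{e ∈ powersetCard k univ | S ⊆ e ∧ c e = γ} ≤ m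

def monoPairs (c : Finset V → C) (k : ℕ) (A : Finset V) : Finset (Finset V × Finset V) :=
  {p ∈ A.powersetCard k ×ˢ A.powersetCard k | p.1 ≠ p.2 ∧ c p.1 = c p.2}

def extensionPairs (c : Finset V → C) (k : ℕ) (B : Finset V) (y : V) :
    Finset (Finset V × Finset V) :=
  {q ∈ B.powersetCard k ×ˢ B.powersetCard (k - 1) | c (insert y q.2) = c q.1}

theorem mem_monoPairs {c : Finset V → C} {k : ℕ} {A : Finset V} {p : Finset V × Finset V} :
    p ∈ monoPairs c k A ↔
      (p.1 ⊆ A ∧ #p.1 = k) ∧ (p.2 ⊆ A ∧ #p.2 = k) ∧ p.1 ≠ p.2 ∧ c p.1 = c p.2 := by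
  simp [monoPairs, and_assoc]

theorem card_monoPairs_le_sum (c : Finset V → C) (k : ℕ) (A : Finset V) :
    #(monoPairs c k A) ≤ ∑ y ∈ A, #(extensionPairs c k (A.erase y) y) := by
  calc #(monoPairs c k A) ≤ ∑ p ∈ monoPairs c k A, #(p.2 \ p.1) := by
        rw [card_eq_sum_ones]
        refine sum_le_sum fun p hp => card_pos.2 (sdiff_nonempty.2 fun h => ?_)
        obtain ⟨⟨-, h₁⟩, ⟨-, h₂⟩, hne, -⟩ := mem_monoPairs.1 hp
        exact hne (eq_of_subset_of_card_le h (h₁.trans h₂.symm).le).symm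
    _ = #((monoPairs c k A).sigma fun p => p.2 \ p.1) := (card_sigma _ _).symm
    _ ≤ #(A.sigma fun y => extensionPairs c k (A.erase y) y) := by
        refine card_le_card_of_injOn (fun x => ⟨x.2, (x.1.1, x.1.2.erase x.2)⟩) ?_ ?_
        · rintro ⟨⟨e₁, e₂⟩, y⟩ hx
          simp only [coe_sigma, Set.mem_sigma_iff, mem_coe, mem_sdiff] at hx
          obtain ⟨hp, hy₂, hy₁⟩ := hx
          obtain ⟨⟨hA₁, h₁⟩, ⟨hA₂, h₂⟩, -, hc⟩ := mem_monoPairs.1 hp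
          simp only [extensionPairs, coe_sigma, Set.mem_sigma_iff, mem_coe, mem_filter, mem_product,
            mem_powersetCard, insert_erase hy₂]
          refine ⟨hA₂ hy₂, ⟨⟨?_, h₁⟩, erase_subset_erase y hA₂, ?_⟩, hc.symm⟩
          · exact fun x hx => mem_erase.2 ⟨fun h => hy₁ (h ▸ hx), hA₁ hx⟩
          · rw [card_erase_of_mem hy₂, h₂]
        · rintro ⟨⟨e₁, e₂⟩, y⟩ hx ⟨⟨e₁', e₂'⟩, y'⟩ hx' h
          simp only [Sigma.mk.injEq, Prod.mk.injEq, heq_eq_eq] at h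
          obtain ⟨rfl, rfl, h⟩ := h
          simp only [coe_sigma, Set.mem_sigma_iff, mem_coe, mem_sdiff] at hx hx'
          rw [← insert_erase hx.2.1, ← insert_erase hx'.2.1, h]
    _ = _ := card_sigma _ _

section

variable [Fintype V]

theorem card_filter_insert_le {c : Finset V → C} {k m : ℕ} (hc : IsGoodColoring c k m)
    (hk : 1 ≤ k) {S Y : Finset V} (hS : #S = k - 1) (hY : Disjoint Y S) (γ : C) :
    #{y ∈ Y | c (insert y S) = γ} ≤ m := by
  refine (card_le_card_of_injOn (insert · S) (fun y hy => ?_) (fun y hy y' _ h => ?_)).trans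
    (hc S hS γ)
  · rw [mem_coe, mem_filter] at hy
    have hyS : y ∉ S := disjoint_left.1 hY hy.1
    simp only [mem_coe, mem_filter, mem_powersetCard, subset_univ, true_and,
      card_insert_of_notMem hyS, hS, subset_insert, hy.2, and_true]
    omega
  · exact (insert_inj (disjoint_left.1 hY (mem_filter.1 hy).1)).1 h

theorem sum_powersetCard_succ_sum_erase {M : Type*} [AddCommMonoid M] (s : ℕ)
    (G : Finset V → V → M) :
    ∑ A ∈ powersetCard (s + 1) (univ : Finset V), ∑ y ∈ A, G (A.erase y) y =
      ∑ B ∈ powersetCard s (univ : Finset V), ∑ y ∈ Bᶜ, G B y := by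
  rw [sum_sigma', sum_sigma']
  refine sum_nbij' (fun x => ⟨x.1.erase x.2, x.2⟩) (fun x => ⟨insert x.2 x.1, x.2⟩) ?_ ?_ ?_ ?_ ?_
  · rintro ⟨A, y⟩ h
    simp_all [card_erase_of_mem]
  · rintro ⟨B, y⟩ h
    simp_all [card_insert_of_notMem]
  · rintro ⟨A, y⟩ h
    simp_all [insert_erase]
  · rintro ⟨B, y⟩ h
    simp_all
  · intro x hx
    rfl

theorem sum_card_monoPairs_le {c : Finset V → C} {k m : ℕ} (hc : IsGoodColoring c k m)
    (hk : 1 ≤ k) (s : ℕ) :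
    ∑ A ∈ powersetCard (s + 1) univ, #(monoPairs c k A) ≤
      (Fintype.card V).choose s * (m * (s.choose k * s.choose (k - 1))) := by
  calc _ ≤ ∑ A ∈ powersetCard (s + 1) univ, ∑ y ∈ A, #(extensionPairs c k (A.erase y) y) :=
        sum_le_sum fun A _ => card_monoPairs_le_sum c k A
    _ = ∑ B ∈ powersetCard s univ, ∑ y ∈ Bᶜ, #(extensionPairs c k B y) :=
        sum_powersetCard_succ_sum_erase s fun B y => #(extensionPairs c k B y)
    _ ≤ ∑ B ∈ powersetCard s univ, m * (s.choose k * s.choose (k - 1)) := by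
        refine sum_le_sum fun B hB => ?_
        calc ∑ y ∈ Bᶜ, #(extensionPairs c k B y)
            = ∑ q ∈ B.powersetCard k ×ˢ B.powersetCard (k - 1),
                #{y ∈ Bᶜ | c (insert y q.2) = c q.1} := by
              simp only [extensionPairs, card_filter]
              exact sum_comm
          _ ≤ ∑ q ∈ B.powersetCard k ×ˢ B.powersetCard (k - 1), m := by
              refine sum_le_sum fun q hq => ?_
              have hq₂ := mem_powersetCard.1 (mem_product.1 hq).2
              exact card_filter_insert_le hc hk hq₂.2 (disjoint_compl_left.mono_right hq₂.1) _
          _ = m * (s.choose k * s.choose (k - 1)) := by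
              rw [sum_const, card_product, card_powersetCard, card_powersetCard,
                (mem_powersetCard.1 hB).2, smul_eq_mul, mul_comm]
    _ = _ := by rw [sum_const, card_powersetCard, card_univ, smul_eq_mul]

end

theorem exists_rainbow_subset_of_card_monoPairs_le (c : Finset V → C) (k : ℕ) (A : Finset V)
    {s : ℕ} (h : #(monoPairs c k A) ≤ 2 * s) :
    ∃ T ⊆ A, #A - s ≤ #T ∧ Set.InjOn c (T.powersetCard k) := by
  set F := (monoPairs c k A).image fun p => p.1 ∆ p.2
  have hF : #F ≤ s := by
    have hswap : ∀ p ∈ monoPairs c k A, p.swap ∈ monoPairs c k A := fun p hp => by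
      rw [mem_monoPairs] at hp ⊢
      exact ⟨hp.2.1, hp.1, hp.2.2.1.symm, hp.2.2.2.symm⟩
    have := two_mul_card_image_le_of_swap (f := fun p => p.1 ∆ p.2) hswap
      (fun p hp => (mem_monoPairs.1 hp).2.2.1) (fun p => symmDiff_comm _ _)
    exact Nat.le_of_mul_le_mul_left (this.trans h) two_pos
  obtain ⟨D, hD, hhit⟩ := exists_transversal_card_le F (by
    simp only [F, mem_image, forall_exists_index, and_imp]
    rintro _ p hp rfl
    exact symmDiff_nonempty.2 (mem_monoPairs.1 hp).2.2.1)
  refine ⟨A \ D, sdiff_subset, (Nat.sub_le_sub_left (hD.trans hF) _).trans (le_card_sdiff D A),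
    fun e₁ he₁ e₂ he₂ hc => ?_⟩
  rw [mem_coe, mem_powersetCard] at he₁ he₂
  by_contra hne
  have hmem : (e₁, e₂) ∈ monoPairs c k A :=
    mem_monoPairs.2 ⟨⟨he₁.1.trans sdiff_subset, he₁.2⟩, ⟨he₂.1.trans sdiff_subset, he₂.2⟩, hne, hc⟩
  obtain ⟨v, hvD, hv⟩ := hhit (e₁ ∆ e₂) (mem_image.2 ⟨_, hmem, rfl⟩)
  have hvT : v ∈ A \ D := (mem_symmDiff.1 hv).elim (fun h => he₁.1 h.1) (fun h => he₂.1 h.1)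
  exact (mem_sdiff.1 hvT).2 hvD

end Coloring

theorem stmt_0 {V C : Type*} [Fintype V] [DecidableEq V] [DecidableEq C]
    (k m t : ℕ) (hk : 2 ≤ k) (hm : 1 ≤ m) (ht : k < t)
    (hn : Fintype.card V = 4 * m * t ^ (2 * k - 1))
    (c : Finset V → C)
    (hgood : ∀ S : Finset V, S.card = k - 1 → ∀ γ : C,
      ((Finset.powersetCard k (Finset.univ : Finset V)).filter
        (fun e => S ⊆ e ∧ c e = γ)).card ≤ m) :
    ∃ T : Finset V, t ≤ T.card ∧
      ∀ e₁ ∈ Finset.powersetCard k T, ∀ e₂ ∈ Finset.powersetCard k T,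
        c e₁ = c e₂ → e₁ = e₂ := by
  obtain ⟨s, hs⟩ : ∃ s, 2 * t = s + 1 := ⟨2 * t - 1, by omega⟩
  have hnum : m * (s.choose k * s.choose (k - 1)) + s ≤ Fintype.card V := by
    have := choose_mul_choose_pred_add_le hk (show 0 < t by omega)
    rw [show 2 * t - 1 = s by omega] at this
    rw [hn]
    nlinarith
  have hsum : ∑ A ∈ powersetCard (2 * t) univ, #(monoPairs c k A) ≤
      ∑ _A ∈ powersetCard (2 * t) (univ : Finset V), 2 * t := by
    rw [sum_const, card_powersetCard, card_univ, smul_eq_mul, hs, Nat.choose_succ_right_eq]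
    exact (sum_card_monoPairs_le hgood (by omega) s).trans (Nat.mul_le_mul_left _ (by omega))
  have hV : 2 * t ≤ Fintype.card V := by
    have := Nat.le_self_pow (show 2 * k - 1 ≠ 0 by omega) t
    rw [hn]
    nlinarith
  obtain ⟨A, hA, hAcard⟩ := exists_le_of_sum_le
    (powersetCard_nonempty.2 (by rwa [card_univ])) hsum
  obtain ⟨T, -, hT, hinj⟩ := exists_rainbow_subset_of_card_monoPairs_le c k A hAcard
  exact ⟨T, by rw [(mem_powersetCard.1 hA).2] at hT; omega, hinj⟩
end

section
/- Let P be a finite set of n points in ℝ^d (d ≥ 2) and suppose that no sphere centered at a point of P contains more than m points of P; that is, for every p ∈ P and every r > 0, the number of points q ∈ P with ‖q - p‖ = r is at most m. If n ≥ 4·m·t³, then P contains a subset S of at least t points such that all pairwise distances between distinct points of S are distinct. -/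
/-!
Colour each pair of points by its distance. The sphere condition says that at every point each
colour occurs on at most `m` pairs, and a set is distance-distinct iff it is rainbow. A set that is
not rainbow contains a monochromatic *cherry* `xa, xb` or a monochromatic *matching* `ab, a'b'`
on four points. Counting ordered tuples, there are at most `(m - 1) n² / 2` cherry vertex sets and
`m n³ / 8` matching vertex sets. A random `2t`-subset of `P` contains a fixed `j`-set with
probability at most `(2t / n) ^ j`, so when `n ≥ 4 m t³` some `2t`-subset contains at most `t` of
these bad sets; deleting one point from each leaves a rainbow set of at least `t` points.
-/

open Finset

lemma exists_subset_forall_not_subset {α : Type*} [DecidableEq α] (R : Finset α)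
    (F : Finset (Finset α)) (hF : ∀ C ∈ F, C.Nonempty) :
    ∃ S ⊆ R, #R - #F ≤ #S ∧ ∀ C ∈ F, ¬C ⊆ S := by
  induction F using Finset.induction_on with
  | empty => exact ⟨R, Subset.rfl, by simp, by simp⟩
  | insert C F hCF ih =>
    obtain ⟨S, hSR, hcard, hS⟩ := ih fun D hD => hF D (mem_insert_of_mem hD)
    obtain ⟨x, hx⟩ := hF C (mem_insert_self C F)
    refine ⟨S.erase x, (erase_subset x S).trans hSR, ?_, ?_⟩
    · rw [card_insert_of_notMem hCF]
      have := pred_card_le_card_erase (s := S) (a := x)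
      omega
    · simp only [mem_insert, forall_eq_or_imp]
      exact ⟨fun h => by simpa using h hx,
        fun D hD h => hS D hD (h.trans (erase_subset x S))⟩

lemma four_mul_le_of_four_mul_pow_le {m t n : ℕ} (hm : 0 < m) (hn : 4 * m * t ^ 3 ≤ n) :
    4 * t ≤ n := by
  have := Nat.le_self_pow (by norm_num : 3 ≠ 0) t
  nlinarith

/-- A uniformly random `k`-subset of an `n`-set contains a fixed `j`-set with probability
at most `(k / n) ^ j`. -/
lemma Nat.choose_sub_mul_pow_le {n k j : ℕ} (hjk : j ≤ k) (hkn : k ≤ n) :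
    (n - j).choose (k - j) * n ^ j ≤ n.choose k * k ^ j := by
  induction j with
  | zero => simp
  | succ j ih =>
    have hj : j < k := hjk
    have hpascal :
        (n - j) * (n - (j + 1)).choose (k - (j + 1)) = (n - j).choose (k - j) * (k - j) := by
      have := Nat.add_one_mul_choose_eq (n - (j + 1)) (k - (j + 1))
      rwa [show n - (j + 1) + 1 = n - j by omega, show k - (j + 1) + 1 = k - j by omega] at this
    have hratio : (k - j) * n ≤ k * (n - j) := by
      rw [Nat.sub_mul, Nat.mul_sub]
      exact Nat.sub_le_sub_left (by rw [mul_comm j n]; exact Nat.mul_le_mul_right j hkn) _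
    refine Nat.le_of_mul_le_mul_left ?_ (show 0 < n - j by omega)
    calc (n - j) * ((n - (j + 1)).choose (k - (j + 1)) * n ^ (j + 1))
        = (n - j).choose (k - j) * n ^ j * ((k - j) * n) := by rw [← mul_assoc, hpascal]; ring
      _ ≤ n.choose k * k ^ j * (k * (n - j)) := Nat.mul_le_mul (ih hj.le) hratio
      _ = (n - j) * (n.choose k * k ^ (j + 1)) := by ring

/-- The left side is `n⁴ (N₃ (2t/n)³ + N₄ (2t/n)⁴)`, which bounds `n⁴` times the expected number
of bad sets in a random `2t`-subset when there are `N₃` cherry sets and `N₄` matching sets. -/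
lemma expected_count_bound {m t n N₃ N₄ : ℕ} (ht : 2 ≤ t) (hn : 4 * m * t ^ 3 ≤ n)
    (h₃ : 2 * N₃ ≤ (m - 1) * n ^ 2) (h₄ : 8 * N₄ ≤ m * n ^ 3) :
    N₃ * (2 * t) ^ 3 * n + N₄ * (2 * t) ^ 4 ≤ t * n ^ 4 := by
  have key : 4 * (m - 1) * t ^ 2 + 2 * m * t ^ 3 ≤ n := by
    have : 4 * (m - 1) * t ^ 2 ≤ 2 * m * t ^ 3 :=
      calc 4 * (m - 1) * t ^ 2 ≤ 4 * m * t ^ 2 := by gcongr; omega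
        _ = 2 * m * (2 * t ^ 2) := by ring
        _ ≤ 2 * m * (t * t ^ 2) := by gcongr
        _ = 2 * m * t ^ 3 := by ring
    linarith
  refine Nat.le_of_mul_le_mul_left ?_ (show 0 < 8 by norm_num)
  calc 8 * (N₃ * (2 * t) ^ 3 * n + N₄ * (2 * t) ^ 4)
      = 32 * t ^ 3 * n * (2 * N₃) + 16 * t ^ 4 * (8 * N₄) := by ring
    _ ≤ 32 * t ^ 3 * n * ((m - 1) * n ^ 2) + 16 * t ^ 4 * (m * n ^ 3) := by gcongr
    _ = 8 * (t * n ^ 3 * (4 * (m - 1) * t ^ 2 + 2 * m * t ^ 3)) := by ring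
    _ ≤ 8 * (t * n ^ 3 * n) := by gcongr
    _ = 8 * (t * n ^ 4) := by ring

namespace PairColoring

variable {α γ : Type*}

def IsRainbow (c : Sym2 α → γ) (S : Finset α) : Prop :=
  Set.InjOn c {e | e ∈ S.sym2 ∧ ¬e.IsDiag}

variable {c : Sym2 α → γ} {P S : Finset α} {m t : ℕ}

lemma IsRainbow.of_card_le_one (hS : #S ≤ 1) : IsRainbow c S := by
  rintro e ⟨he, hed⟩ e' ⟨-, -⟩ -
  induction e with | _ a b => ?_
  rw [mk_mem_sym2_iff] at he
  exact absurd (card_le_one.1 hS a he.1 b he.2) hed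

lemma IsRainbow.pair_eq (hS : IsRainbow c S) {p q p' q' : α} (hp : p ∈ S) (hq : q ∈ S)
    (hp' : p' ∈ S) (hq' : q' ∈ S) (hpq : p ≠ q) (hpq' : p' ≠ q') (h : c s(p, q) = c s(p', q')) :
    ({p, q} : Set α) = {p', q'} := by
  rcases Sym2.eq_iff.1 (hS ⟨mk_mem_sym2_iff.2 ⟨hp, hq⟩, hpq⟩ ⟨mk_mem_sym2_iff.2 ⟨hp', hq'⟩, hpq'⟩ h)
    with ⟨rfl, rfl⟩ | ⟨rfl, rfl⟩
  · rfl
  · exact Set.pair_comm _ _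

variable [DecidableEq α] [DecidableEq γ]

def IsMGood (c : Sym2 α → γ) (P : Finset α) (m : ℕ) : Prop :=
  ∀ p ∈ P, ∀ x : γ, #{q ∈ P | q ≠ p ∧ c s(p, q) = x} ≤ m

def monoCherries (c : Sym2 α → γ) (P : Finset α) : Finset (α × α × α) :=
  (P ×ˢ P ×ˢ P).filter fun (x, a, b) => x ≠ a ∧ x ≠ b ∧ a ≠ b ∧ c s(x, a) = c s(x, b)

def monoMatchings (c : Sym2 α → γ) (P : Finset α) : Finset (α × α × α × α) :=
  (P ×ˢ P ×ˢ P ×ˢ P).filter fun (a, b, a', b') =>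
    a ≠ b ∧ a ≠ a' ∧ a ≠ b' ∧ b ≠ a' ∧ b ≠ b' ∧ a' ≠ b' ∧ c s(a, b) = c s(a', b')

@[simp]
lemma mem_monoCherries {x a b : α} :
    (x, a, b) ∈ monoCherries c P ↔ (x ∈ P ∧ a ∈ P ∧ b ∈ P) ∧
      x ≠ a ∧ x ≠ b ∧ a ≠ b ∧ c s(x, a) = c s(x, b) := by
  simp [monoCherries]

@[simp]
lemma mem_monoMatchings {a b a' b' : α} :
    (a, b, a', b') ∈ monoMatchings c P ↔ (a ∈ P ∧ b ∈ P ∧ a' ∈ P ∧ b' ∈ P) ∧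
      a ≠ b ∧ a ≠ a' ∧ a ≠ b' ∧ b ≠ a' ∧ b ≠ b' ∧ a' ≠ b' ∧ c s(a, b) = c s(a', b') := by
  simp [monoMatchings]

lemma card_monoCherries_le (hc : IsMGood c P m) :
    #(monoCherries c P) ≤ (m - 1) * #P ^ 2 := by
  rw [sq, ← card_product]
  refine card_le_mul_card_image_of_maps_to (f := fun z => (z.1, z.2.1)) ?_ _ ?_
  · rintro ⟨x, a, b⟩ h
    simp_all
  rintro ⟨x, a⟩ hxa
  rw [mem_product] at hxa
  rcases eq_or_ne x a with rfl | hne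
  · refine (card_eq_zero.2 <| filter_eq_empty_iff.2 ?_).trans_le (Nat.zero_le _)
    rintro ⟨x', a', b⟩ h hxa
    simp only [Prod.mk.injEq] at hxa
    exact (mem_monoCherries.1 h).2.1 (hxa.1.trans hxa.2.symm)
  calc #{z ∈ monoCherries c P | (z.1, z.2.1) = (x, a)}
      ≤ #(({q ∈ P | q ≠ x ∧ c s(x, q) = c s(x, a)}).erase a) := by
        refine card_le_card_of_injOn (·.2.2) ?_ ?_
        · rintro ⟨x', a', b⟩ h
          simp only [mem_coe, mem_filter, mem_monoCherries, Prod.mk.injEq] at h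
          obtain ⟨⟨⟨-, -, hb⟩, -, hxb, hab, hcol⟩, rfl, rfl⟩ := h
          simp [hb, hab.symm, hxb.symm, hcol]
        · rintro ⟨x₁, a₁, b₁⟩ h₁ ⟨x₂, a₂, b₂⟩ h₂ (rfl : b₁ = b₂)
          simp only [mem_coe, mem_filter, Prod.mk.injEq] at h₁ h₂
          obtain ⟨-, rfl, rfl⟩ := h₁
          obtain ⟨-, rfl, rfl⟩ := h₂
          rfl
    _ = #{q ∈ P | q ≠ x ∧ c s(x, q) = c s(x, a)} - 1 :=
        card_erase_of_mem (by simp [hxa.2, hne.symm])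
    _ ≤ m - 1 := Nat.sub_le_sub_right (hc x hxa.1 _) 1

lemma card_monoMatchings_le (hc : IsMGood c P m) :
    #(monoMatchings c P) ≤ m * #P ^ 3 := by
  rw [pow_succ', sq, ← card_product, ← card_product]
  refine card_le_mul_card_image_of_maps_to (f := fun z => (z.1, z.2.1, z.2.2.1)) ?_ _ ?_
  · rintro ⟨a, b, a', b'⟩ h
    simp_all
  rintro ⟨a, b, a'⟩ habc
  calc #{z ∈ monoMatchings c P | (z.1, z.2.1, z.2.2.1) = (a, b, a')}
      ≤ #{q ∈ P | q ≠ a' ∧ c s(a', q) = c s(a, b)} := by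
        refine card_le_card_of_injOn (·.2.2.2) ?_ ?_
        · rintro ⟨a₁, b₁, a₁', b'⟩ h
          simp only [mem_coe, mem_filter, mem_monoMatchings, Prod.mk.injEq] at h
          obtain ⟨⟨⟨-, -, -, hb'⟩, -, -, -, -, -, hne, hcol⟩, rfl, rfl, rfl⟩ := h
          simp [hb', hne.symm, hcol]
        · rintro ⟨a₁, b₁, c₁, d₁⟩ h₁ ⟨a₂, b₂, c₂, d₂⟩ h₂ (rfl : d₁ = d₂)
          simp only [mem_coe, mem_filter, Prod.mk.injEq] at h₁ h₂
          obtain ⟨-, rfl, rfl, rfl⟩ := h₁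
          obtain ⟨-, rfl, rfl, rfl⟩ := h₂
          rfl
    _ ≤ m := hc _ (mem_product.1 (mem_product.1 habc).2).2 _

def cherrySets (c : Sym2 α → γ) (P : Finset α) : Finset (Finset α) :=
  (monoCherries c P).image fun (x, a, b) => {x, a, b}

def matchingSets (c : Sym2 α → γ) (P : Finset α) : Finset (Finset α) :=
  (monoMatchings c P).image fun (a, b, a', b') => {a, b, a', b'}

lemma two_mul_card_cherrySets_le : 2 * #(cherrySets c P) ≤ #(monoCherries c P) := by
  refine mul_card_image_le_card _ _ ?_
  simp only [mem_image]
  rintro _ ⟨⟨x, a, b⟩, h, rfl⟩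
  have hab := (mem_monoCherries.1 h).2.2.2.1
  calc 2 = #{(x, a, b), (x, b, a)} := (card_pair (by simp [hab])).symm
    _ ≤ _ := by
      refine card_le_card fun z hz => ?_
      simp only [mem_insert, mem_singleton] at hz
      rw [mem_filter]
      rcases hz with rfl | rfl
      · exact ⟨h, rfl⟩
      · refine ⟨by simp_all [Ne.symm], ?_⟩
        ext; simp only [mem_insert, mem_singleton]; tauto

lemma eight_mul_card_matchingSets_le : 8 * #(matchingSets c P) ≤ #(monoMatchings c P) := by
  refine mul_card_image_le_card _ _ ?_
  simp only [mem_image]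
  rintro _ ⟨⟨a, b, a', b'⟩, h, rfl⟩
  obtain ⟨-, h1, h2, h3, h4, h5, h6, -⟩ := mem_monoMatchings.1 h
  calc 8 = #{(a, b, a', b'), (b, a, a', b'), (a, b, b', a'), (b, a, b', a'),
        (a', b', a, b), (b', a', a, b), (a', b', b, a), (b', a', b, a)} := by
        simp [card_insert_of_notMem, *, Ne.symm]
    _ ≤ _ := by
      refine card_le_card fun z hz => ?_
      simp only [mem_insert, mem_singleton] at hz
      rw [mem_filter]
      rcases hz with rfl | rfl | rfl | rfl | rfl | rfl | rfl | rfl <;>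
        refine ⟨by simp_all [Sym2.eq_swap, Ne.symm], ?_⟩ <;>
        ext <;> simp only [mem_insert, mem_singleton] <;> tauto

lemma card_of_mem_cherrySets {C : Finset α} (hC : C ∈ cherrySets c P) : #C = 3 := by
  obtain ⟨⟨x, a, b⟩, h, rfl⟩ := mem_image.1 hC
  obtain ⟨-, hxa, hxb, hab, -⟩ := mem_monoCherries.1 h
  exact card_eq_three.2 ⟨x, a, b, hxa, hxb, hab, rfl⟩

lemma card_of_mem_matchingSets {C : Finset α} (hC : C ∈ matchingSets c P) : #C = 4 := by
  obtain ⟨⟨a, b, a', b'⟩, h, rfl⟩ := mem_image.1 hC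
  obtain ⟨-, h1, h2, h3, h4, h5, h6, -⟩ := mem_monoMatchings.1 h
  exact card_eq_four.2 ⟨a, b, a', b', h1, h2, h3, h4, h5, h6, rfl⟩

def badSets (c : Sym2 α → γ) (P : Finset α) : Finset (Finset α) :=
  cherrySets c P ∪ matchingSets c P

lemma subset_of_mem_badSets {C : Finset α} (hC : C ∈ badSets c P) : C ⊆ P := by
  rcases mem_union.1 hC with hC | hC <;> obtain ⟨z, h, rfl⟩ := mem_image.1 hC
  · obtain ⟨⟨hx, ha, hb⟩, -⟩ := mem_monoCherries.1 h
    simp [insert_subset_iff, *]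
  · obtain ⟨⟨ha, hb, ha', hb'⟩, -⟩ := mem_monoMatchings.1 h
    simp [insert_subset_iff, *]

lemma card_of_mem_badSets {C : Finset α} (hC : C ∈ badSets c P) : #C = 3 ∨ #C = 4 :=
  (mem_union.1 hC).imp card_of_mem_cherrySets card_of_mem_matchingSets

lemma disjoint_cherrySets_matchingSets : Disjoint (cherrySets c P) (matchingSets c P) :=
  disjoint_left.2 fun _ h₃ h₄ => by
    have := card_of_mem_cherrySets h₃
    have := card_of_mem_matchingSets h₄
    omega

lemma IsRainbow.of_forall_not_subset (hSP : S ⊆ P) (hS : ∀ C ∈ badSets c P, ¬C ⊆ S) :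
    IsRainbow c S := by
  rintro e ⟨he, hed⟩ e' ⟨he', hed'⟩ hcol
  by_contra hne
  by_cases hshared : ∃ x, x ∈ e ∧ x ∈ e'
  · obtain ⟨x, hxe, hxe'⟩ := hshared
    obtain ⟨a, rfl⟩ : ∃ a, s(x, a) = e := ⟨_, Sym2.other_spec hxe⟩
    obtain ⟨b, rfl⟩ : ∃ b, s(x, b) = e' := ⟨_, Sym2.other_spec hxe'⟩
    rw [mk_mem_sym2_iff] at he he'
    have hC : {x, a, b} ∈ badSets c P := by
      refine mem_union_left _ (mem_image_of_mem _ (mem_monoCherries.2 ?_))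
      refine ⟨⟨hSP he.1, hSP he.2, hSP he'.2⟩, hed, hed', fun hab => hne (by rw [hab]), hcol⟩
    exact hS _ hC (by simp [insert_subset_iff, he.1, he.2, he'.2])
  · induction e with | _ a b => ?_
    induction e' with | _ a' b' => ?_
    push Not at hshared
    rw [mk_mem_sym2_iff] at he he'
    have hC : {a, b, a', b'} ∈ badSets c P := by
      refine mem_union_right _ (mem_image_of_mem _ (mem_monoMatchings.2 ?_))
      refine ⟨⟨hSP he.1, hSP he.2, hSP he'.1, hSP he'.2⟩, hed, ?_⟩
      simp_all
    exact hS _ hC (by simp [insert_subset_iff, he.1, he.2, he'.1, he'.2])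

lemma sum_card_supersets_le (hc : IsMGood c P m) (hm : 0 < m) (hn : 4 * m * t ^ 3 ≤ #P)
    (ht : 2 ≤ t) :
    ∑ C ∈ badSets c P, #{R ∈ P.powersetCard (2 * t) | C ⊆ R} ≤ t * (#P).choose (2 * t) := by
  set n := #P
  set K := n.choose (2 * t)
  set w : Finset α → ℕ := fun C => #{R ∈ P.powersetCard (2 * t) | C ⊆ R}
  have hk : 2 * t ≤ n := by have := four_mul_le_of_four_mul_pow_le hm hn; omega
  have hw : ∀ C ∈ badSets c P, w C * n ^ #C ≤ K * (2 * t) ^ #C := by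
    intro C hC
    have hCk : #C ≤ 2 * t := by rcases card_of_mem_badSets hC with h | h <;> omega
    rw [show w C = _ from card_filter_powersetCard_subset _ _ _ (subset_of_mem_badSets hC) hCk]
    exact Nat.choose_sub_mul_pow_le hCk hk
  have h₃ : ∀ C ∈ cherrySets c P, w C * n ^ 4 ≤ K * (2 * t) ^ 3 * n := fun C hC => by
    have := hw C (mem_union_left _ hC)
    rw [card_of_mem_cherrySets hC] at this
    calc w C * n ^ 4 = w C * n ^ 3 * n := by ring
      _ ≤ K * (2 * t) ^ 3 * n := by gcongr
  have h₄ : ∀ C ∈ matchingSets c P, w C * n ^ 4 ≤ K * (2 * t) ^ 4 := fun C hC => by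
    simpa [card_of_mem_matchingSets hC] using hw C (mem_union_right _ hC)
  refine Nat.le_of_mul_le_mul_right ?_ (pow_pos (show 0 < n by omega) 4)
  calc (∑ C ∈ badSets c P, w C) * n ^ 4
      = ∑ C ∈ cherrySets c P, w C * n ^ 4 + ∑ C ∈ matchingSets c P, w C * n ^ 4 := by
        rw [badSets, sum_union disjoint_cherrySets_matchingSets, add_mul, sum_mul, sum_mul]
    _ ≤ ∑ C ∈ cherrySets c P, K * (2 * t) ^ 3 * n + ∑ C ∈ matchingSets c P, K * (2 * t) ^ 4 :=
        add_le_add (sum_le_sum h₃) (sum_le_sum h₄)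
    _ = K * (#(cherrySets c P) * (2 * t) ^ 3 * n + #(matchingSets c P) * (2 * t) ^ 4) := by
        simp only [sum_const, smul_eq_mul]; ring
    _ ≤ K * (t * n ^ 4) := by
        gcongr
        refine expected_count_bound ht hn ?_ ?_
        · exact two_mul_card_cherrySets_le.trans (card_monoCherries_le hc)
        · exact eight_mul_card_matchingSets_le.trans (card_monoMatchings_le hc)
    _ = t * K * n ^ 4 := by ring

theorem exists_isRainbow_subset (hc : IsMGood c P m) (hm : 0 < m) (hn : 4 * m * t ^ 3 ≤ #P) :
    ∃ S ⊆ P, t ≤ #S ∧ IsRainbow c S := by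
  have h4t := four_mul_le_of_four_mul_pow_le hm hn
  rcases lt_or_ge t 2 with ht | ht
  · obtain ⟨S, hSP, hS⟩ := exists_subset_card_eq (s := P) (n := t) (by omega)
    exact ⟨S, hSP, hS.ge, .of_card_le_one (by omega)⟩
  obtain ⟨R, hR, hRt⟩ : ∃ R ∈ P.powersetCard (2 * t), #{C ∈ badSets c P | C ⊆ R} ≤ t := by
    refine exists_le_of_sum_le (powersetCard_nonempty.2 (by omega)) ?_
    calc ∑ R ∈ P.powersetCard (2 * t), #{C ∈ badSets c P | C ⊆ R}
        = ∑ C ∈ badSets c P, #{R ∈ P.powersetCard (2 * t) | C ⊆ R} :=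
          by simp only [card_filter]; exact sum_comm
      _ ≤ t * (#P).choose (2 * t) := sum_card_supersets_le hc hm hn ht
      _ = ∑ R ∈ P.powersetCard (2 * t), t := by
          rw [sum_const, card_powersetCard, smul_eq_mul, mul_comm]
  obtain ⟨hRP, hRcard⟩ := mem_powersetCard.1 hR
  have hne : ∀ C ∈ {C ∈ badSets c P | C ⊆ R}, C.Nonempty := fun C hC => by
    rw [← card_pos]
    rcases card_of_mem_badSets (mem_filter.1 hC).1 with h | h <;> omega
  obtain ⟨S, hSR, hScard, hS⟩ := exists_subset_forall_not_subset R _ hne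
  refine ⟨S, hSR.trans hRP, by omega, .of_forall_not_subset (hSR.trans hRP) ?_⟩
  exact fun C hC hCS => hS C (mem_filter.2 ⟨hC, hCS.trans hSR⟩) hCS

lemma isMGood_dist {E : Type*} [NormedAddCommGroup E] [DecidableEq E] {P : Finset E}
    (hsphere : ∀ p ∈ P, ∀ r : ℝ, 0 < r → {q | q ∈ (P : Set E) ∧ ‖q - p‖ = r}.ncard ≤ m) :
    IsMGood (Sym2.lift ⟨dist, dist_comm⟩) P m := by
  intro p hp r
  rcases le_or_gt r 0 with hr | hr
  · refine (card_eq_zero.2 <| filter_eq_empty_iff.2 fun q _ h => ?_).trans_le (Nat.zero_le m)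
    have hpq : dist p q = r := h.2
    exact (dist_pos.2 h.1.symm).not_ge (hpq ▸ hr)
  calc #{q ∈ P | q ≠ p ∧ Sym2.lift ⟨dist, dist_comm⟩ s(p, q) = r} ≤ #{q ∈ P | ‖q - p‖ = r} :=
        card_le_card fun q hq => by
          rw [mem_filter] at hq ⊢
          exact ⟨hq.1, by rw [← dist_eq_norm, dist_comm]; exact hq.2.2⟩
    _ = {q | q ∈ (P : Set E) ∧ ‖q - p‖ = r}.ncard := by
        rw [← Set.ncard_coe_finset, coe_filter]; rfl
    _ ≤ m := hsphere p hp r hr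

end PairColoring

open PairColoring in
theorem stmt_7_general (d m t n : ℕ) (hm : 1 ≤ m)
    (P : Finset (EuclideanSpace ℝ (Fin d))) (hP : P.card = n)
    (hn : 4 * m * t ^ 3 ≤ n)
    (hsphere : ∀ p ∈ P, ∀ r : ℝ, 0 < r →
      {q : EuclideanSpace ℝ (Fin d) | q ∈ (P : Set (EuclideanSpace ℝ (Fin d))) ∧
        ‖q - p‖ = r}.ncard ≤ m) :
    ∃ S ⊆ P, t ≤ S.card ∧
      ∀ p ∈ S, ∀ q ∈ S, ∀ p' ∈ S, ∀ q' ∈ S,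
        p ≠ q → p' ≠ q' → dist p q = dist p' q' →
          ({p, q} : Set (EuclideanSpace ℝ (Fin d))) = {p', q'} := by
  classical
  obtain ⟨S, hSP, hSt, hS⟩ := exists_isRainbow_subset (isMGood_dist hsphere) hm (hP ▸ hn)
  exact ⟨S, hSP, hSt, fun p hp q hq p' hp' q' hq' hpq hpq' hd =>
    hS.pair_eq hp hq hp' hq' hpq hpq' hd⟩

theorem stmt_7 (d m t n : ℕ) (hd : 2 ≤ d) (hm : 1 ≤ m) (ht : 1 ≤ t)
    (P : Finset (EuclideanSpace ℝ (Fin d))) (hP : P.card = n)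
    (hn : 4 * m * t ^ 3 ≤ n)
    (hsphere : ∀ p ∈ P, ∀ r : ℝ, 0 < r →
      {q : EuclideanSpace ℝ (Fin d) | q ∈ (P : Set (EuclideanSpace ℝ (Fin d))) ∧
        ‖q - p‖ = r}.ncard ≤ m) :
    ∃ S ⊆ P, t ≤ S.card ∧
      ∀ p ∈ S, ∀ q ∈ S, ∀ p' ∈ S, ∀ q' ∈ S,
        p ≠ q → p' ≠ q' → dist p q = dist p' q' →
          ({p, q} : Set (EuclideanSpace ℝ (Fin d))) = {p', q'} :=
  stmt_7_general d m t n hm P hP hn hsphere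
end

section
/- Let d ≥ 2 and t ≥ d+1 be integers, and let P be a set of n ≥ 8·t^(2d+2) points in ℝ^d. Then there exists a subset S ⊆ P with |S| ≥ t such that the function assigning to each (d+1)-element subset of S the volume of the simplex it spans is injective on those (d+1)-element subsets with nonzero volume. -/
/-- The `(d)`-dimensional volume of the simplex spanned by a set `s` of `d+1` points
in `ℝ^d`: `|det(p₁ - p₀, …, p_d - p₀)| / d!` for any enumeration of `s`
(the value does not depend on the enumeration; if `s` does not have exactly `d+1`
points the defining set is empty and the value is `0`). -/
noncomputable def simplexVolume {d : ℕ} (s : Finset (EuclideanSpace ℝ (Fin d))) : ℝ :=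
  sSup {v : ℝ | ∃ f : Fin (d + 1) → EuclideanSpace ℝ (Fin d),
    Set.range f = ↑s ∧
    v = |Matrix.det (Matrix.of fun i j : Fin d => (f i.succ - f 0) j)| /
          (Nat.factorial d)}

/-!
If some hyperplane contains `t` points of `P`, these points form `S`: all their simplices are
degenerate. Otherwise `S` is grown greedily from a nondegenerate simplex, keeping all its
`(d+1)`-subsets nondegenerate with pairwise distinct volumes. For a `d`-subset `A` of `S`,
`d! vol(A ∪ {p}) = |L_A p|` for an affine function `L_A` vanishing on `A`, and a new point `p` is
admissible unless `|L_A p|` is `0`, `d!` times an old volume, or `|L_B p|` for another `B`. The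
invariant ensures that none of these equations holds identically, so each of them describes at
most two hyperplanes, which together contain fewer than `8 t^(2d+2)` points of `P`.
-/

open Finset

noncomputable def detAff {d : ℕ} (f : Fin (d + 1) → EuclideanSpace ℝ (Fin d)) : ℝ :=
  (Matrix.of fun i j : Fin d => (f i.succ - f 0) j).det

/-- Permuting the points permutes the rows of this matrix, and its determinant is `detAff f`;
so `|detAff f|` does not depend on the enumeration of the points. -/
noncomputable def affineMatrix {d : ℕ} (f : Fin (d + 1) → EuclideanSpace ℝ (Fin d)) :
    Matrix (Fin (d + 1)) (Fin (d + 1)) ℝ :=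
  Matrix.of fun i => Fin.cons 1 (f i)

theorem det_affineMatrix {d : ℕ} (f : Fin (d + 1) → EuclideanSpace ℝ (Fin d)) :
    (affineMatrix f).det = detAff f := by
  let reduced : Matrix (Fin (d + 1)) (Fin (d + 1)) ℝ :=
    Matrix.of (Fin.cons (Fin.cons 1 (f 0)) fun i => Fin.cons 0 (f i.succ - f 0))
  have h_reduce : (affineMatrix f).det = reduced.det := by
    refine Matrix.det_eq_of_forall_row_eq_smul_add_const
      (fun i => if i = 0 then 0 else 1) 0 (if_pos rfl) fun i j => ?_
    refine Fin.cases ?_ (fun i => Fin.cases ?_ (fun j => ?_) j) i <;> simp [affineMatrix, reduced]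
  rw [h_reduce, Matrix.det_succ_column_zero, Fin.sum_univ_succ]
  simp [reduced, detAff, Matrix.submatrix]

theorem abs_detAff_comp_perm {d : ℕ} (f : Fin (d + 1) → EuclideanSpace ℝ (Fin d))
    (σ : Equiv.Perm (Fin (d + 1))) : |detAff (f ∘ σ)| = |detAff f| := by
  rw [← det_affineMatrix, ← det_affineMatrix,
    show affineMatrix (f ∘ σ) = (affineMatrix f).submatrix σ id from rfl, Matrix.det_permute]
  rcases Int.units_eq_one_or (Equiv.Perm.sign σ) with h | h <;> simp [h]

theorem exists_perm_comp_of_range_eq {α : Type*} {k : ℕ} {f g : Fin k → α}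
    (hf : Function.Injective f) (hg : Function.Injective g) (h : Set.range g = Set.range f) :
    ∃ σ : Equiv.Perm (Fin k), g = f ∘ σ :=
  ⟨(Equiv.ofInjective g hg).trans ((Equiv.setCongr h).trans (Equiv.ofInjective f hf).symm),
    funext fun i => by simp [Equiv.apply_ofInjective_symm]⟩

theorem Finset.injective_of_range_eq {α : Type*} {k : ℕ} {s : Finset α} (hs : s.card = k)
    {f : Fin k → α} (hf : Set.range f = s) : Function.Injective f := by
  classical
  have himage : univ.image f = s := by
    apply coe_injective
    rw [coe_image, coe_univ, Set.image_univ, hf]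
  rw [← Set.injOn_univ, ← coe_univ, ← card_image_iff, himage, hs, card_univ, Fintype.card_fin]

theorem simplexVolume_eq_of_range_eq {d : ℕ} {s : Finset (EuclideanSpace ℝ (Fin d))}
    (hs : s.card = d + 1) {f : Fin (d + 1) → EuclideanSpace ℝ (Fin d)} (hf : Set.range f = s) :
    simplexVolume s = |detAff f| / d.factorial := by
  have hvalues : {v : ℝ | ∃ g : Fin (d + 1) → EuclideanSpace ℝ (Fin d), Set.range g = s ∧
      v = |Matrix.det (Matrix.of fun i j : Fin d => (g i.succ - g 0) j)| / d.factorial} =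
      {|detAff f| / d.factorial} := by
    ext v
    constructor
    · rintro ⟨g, hg, rfl⟩
      obtain ⟨σ, rfl⟩ := exists_perm_comp_of_range_eq (s.injective_of_range_eq hs hf)
        (s.injective_of_range_eq hs hg) (hg.trans hf.symm)
      rw [Set.mem_singleton_iff, ← abs_detAff_comp_perm f σ]
      rfl
    · rintro rfl
      exact ⟨f, hf, rfl⟩
  rw [simplexVolume, hvalues, csSup_singleton]

theorem simplexVolume_nonneg {d : ℕ} (s : Finset (EuclideanSpace ℝ (Fin d))) :
    0 ≤ simplexVolume s :=
  Real.sSup_nonneg fun _ ⟨_, _, hv⟩ => hv ▸ by positivity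

def affineForm {d : ℕ} (φ : (Fin d → ℝ) × ℝ) (p : EuclideanSpace ℝ (Fin d)) : ℝ :=
  ∑ j, φ.1 j * p j + φ.2

theorem affineForm_sub {d : ℕ} (φ ψ : (Fin d → ℝ) × ℝ) (p : EuclideanSpace ℝ (Fin d)) :
    affineForm (φ - ψ) p = affineForm φ p - affineForm ψ p := by
  simp only [affineForm, Prod.fst_sub, Prod.snd_sub, Pi.sub_apply, sub_mul, sum_sub_distrib]
  ring

theorem affineForm_add {d : ℕ} (φ ψ : (Fin d → ℝ) × ℝ) (p : EuclideanSpace ℝ (Fin d)) :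
    affineForm (φ + ψ) p = affineForm φ p + affineForm ψ p := by
  simp only [affineForm, Prod.fst_add, Prod.snd_add, Pi.add_apply, add_mul, sum_add_distrib]
  ring

theorem affineForm_neg {d : ℕ} (φ : (Fin d → ℝ) × ℝ) (p : EuclideanSpace ℝ (Fin d)) :
    affineForm (-φ) p = -affineForm φ p := by
  simp only [affineForm, Prod.fst_neg, Prod.snd_neg, Pi.neg_apply, neg_mul, sum_neg_distrib,
    neg_add]

theorem affineForm_zero_fst {d : ℕ} (r : ℝ) (p : EuclideanSpace ℝ (Fin d)) :
    affineForm (0, r) p = r := by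
  simp [affineForm]

theorem detAff_eq_zero_of_affineForm_eq_zero {d : ℕ} {φ : (Fin d → ℝ) × ℝ} (hφ : φ.1 ≠ 0)
    {f : Fin (d + 1) → EuclideanSpace ℝ (Fin d)} (hf : ∀ i, affineForm φ (f i) = 0) :
    detAff f = 0 := by
  rw [detAff, ← Matrix.exists_mulVec_eq_zero_iff]
  refine ⟨φ.1, hφ, funext fun i => ?_⟩
  have hdiff := congrArg₂ (· - ·) (hf i.succ) (hf 0)
  simp only [affineForm, sub_zero, add_sub_add_right_eq_sub, ← sum_sub_distrib] at hdiff
  simp only [Matrix.mulVec, dotProduct, Matrix.of_apply, PiLp.sub_apply, Pi.zero_apply, ← hdiff]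
  exact sum_congr rfl fun j _ => by ring

theorem detAff_ne_zero_of_affineIndependent {d : ℕ} {f : Fin (d + 1) → EuclideanSpace ℝ (Fin d)}
    (hf : AffineIndependent ℝ f) : detAff f ≠ 0 := by
  classical
  have hvsub : LinearIndependent ℝ fun i : Fin d => f i.succ - f 0 :=
    ((affineIndependent_iff_linearIndependent_vsub ℝ f 0).1 hf).comp
      (fun i : Fin d => (⟨i.succ, i.succ_ne_zero⟩ : {x : Fin (d + 1) // x ≠ 0}))
      fun i j h => Fin.succ_injective _ (congrArg Subtype.val h)
  have hrows := hvsub.map' (WithLp.linearEquiv 2 ℝ (Fin d → ℝ)).toLinearMap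
    (WithLp.linearEquiv 2 ℝ (Fin d → ℝ)).ker
  rw [detAff, ← isUnit_iff_ne_zero, ← Matrix.isUnit_iff_isUnit_det,
    ← Matrix.linearIndependent_rows_iff_isUnit]
  exact hrows

theorem exists_affineForm_of_affineSpan_ne_top {d : ℕ} {s : Set (EuclideanSpace ℝ (Fin d))}
    (hs : affineSpan ℝ s ≠ ⊤) {p₀ : EuclideanSpace ℝ (Fin d)} (hp₀ : p₀ ∈ s) :
    ∃ φ : (Fin d → ℝ) × ℝ, φ.1 ≠ 0 ∧ ∀ p ∈ s, affineForm φ p = 0 := by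
  have hspan : vectorSpan ℝ s ≠ ⊤ := by
    rwa [← direction_affineSpan, Ne, AffineSubspace.direction_eq_top_iff_of_nonempty
      ⟨p₀, subset_affineSpan ℝ s hp₀⟩]
  obtain ⟨w, hw, hw0⟩ := Submodule.ne_bot_iff _ |>.1 (mt Submodule.orthogonal_eq_bot_iff.1 hspan)
  refine ⟨(w, -∑ j, w j * p₀ j), fun h => hw0 (PiLp.ext (congrFun h)), fun p hp => ?_⟩
  have horth := (Submodule.mem_orthogonal _ w).1 hw _ (vsub_mem_vectorSpan ℝ hp hp₀)
  simp only [PiLp.inner_apply, vsub_eq_sub, PiLp.sub_apply, RCLike.inner_apply, conj_trivial,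
    mul_sub, sum_sub_distrib, sub_eq_zero] at horth
  rw [affineForm, horth, add_neg_cancel]

theorem exists_simplexVolume_ne_zero {d : ℕ} {P : Finset (EuclideanSpace ℝ (Fin d))}
    (hP : affineSpan ℝ (P : Set (EuclideanSpace ℝ (Fin d))) = ⊤) :
    ∃ e ⊆ P, e.card = d + 1 ∧ simplexVolume e ≠ 0 := by
  classical
  obtain ⟨T, hTP, hspanT, hT⟩ :=
    exists_affineIndependent ℝ (EuclideanSpace ℝ (Fin d)) (P : Set (EuclideanSpace ℝ (Fin d)))
  have : Fintype T := (P.finite_toSet.subset hTP).fintype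
  have hcard : Fintype.card T = d + 1 := by
    have := hT.affineSpan_eq_top_iff_card_eq_finrank_add_one.1
      (by rw [Subtype.range_coe, hspanT, hP])
    rwa [finrank_euclideanSpace_fin] at this
  let enum := (Fintype.equivFinOfCardEq hcard).symm
  have hf : AffineIndependent ℝ (Subtype.val ∘ enum) := hT.comp_embedding enum.toEmbedding
  have he : (univ.image (Subtype.val ∘ enum)).card = d + 1 := by
    rw [card_image_of_injective _ hf.injective, card_univ, Fintype.card_fin]
  refine ⟨univ.image (Subtype.val ∘ enum), fun p hp => ?_, he, ?_⟩
  · obtain ⟨i, -, rfl⟩ := mem_image.1 hp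
    exact hTP (enum i).2
  · rw [simplexVolume_eq_of_range_eq he (by rw [coe_image, coe_univ, Set.image_univ])]
    exact div_ne_zero (abs_ne_zero.2 (detAff_ne_zero_of_affineIndependent hf)) (by positivity)

section LastPoint

variable {m : ℕ} (a : Fin (m + 1) → EuclideanSpace ℝ (Fin (m + 1)))

/-- Cofactor expansion of `detAff (Fin.snoc a p)` along the row `p - a 0`. -/
noncomputable def detAffForm : (Fin (m + 1) → ℝ) × ℝ :=
  let w := fun j : Fin (m + 1) => (-1 : ℝ) ^ (m + (j : ℕ)) *
    (Matrix.of fun (r j' : Fin m) => (a r.succ - a 0) (j.succAbove j')).det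
  (w, -∑ j, w j * a 0 j)

theorem detAff_snoc (p : EuclideanSpace ℝ (Fin (m + 1))) :
    detAff (Fin.snoc a p : Fin (m + 2) → _) = affineForm (detAffForm a) p := by
  rw [detAff, Matrix.det_succ_row _ (Fin.last m), affineForm, detAffForm, ← sub_eq_add_neg,
    ← sum_sub_distrib]
  have h0 : (Fin.snoc a p : Fin (m + 2) → _) 0 = a 0 := Fin.snoc_castSucc (i := 0) ..
  refine sum_congr rfl fun j _ => ?_
  have hminor : (Matrix.of fun i k : Fin (m + 1) =>
      ((Fin.snoc a p : Fin (m + 2) → _) i.succ - (Fin.snoc a p : Fin (m + 2) → _) 0) k).submatrix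
        (Fin.last m).succAbove j.succAbove =
      Matrix.of fun r j' : Fin m => (a r.succ - a 0) (j.succAbove j') := by
    ext r j'
    simp only [Matrix.submatrix_apply, Matrix.of_apply, Fin.succAbove_last, Fin.succ_castSucc,
      Fin.snoc_castSucc, h0]
  rw [hminor]
  simp only [Fin.val_last, h0, PiLp.sub_apply, Matrix.of_apply, Fin.succ_last, Fin.snoc_last]
  ring

theorem detAff_snoc_self (i : Fin (m + 1)) :
    detAff (Fin.snoc a (a i) : Fin (m + 2) → _) = 0 := by
  have h0 : (Fin.snoc a (a i) : Fin (m + 2) → _) 0 = a 0 := Fin.snoc_castSucc (i := 0) ..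
  rcases Fin.eq_zero_or_eq_succ i with rfl | ⟨r, rfl⟩
  · refine Matrix.det_eq_zero_of_row_eq_zero (Fin.last m) fun j => ?_
    simp [h0]
  · refine Matrix.det_zero_of_row_eq (Fin.castSucc_lt_last r).ne (funext fun j => ?_)
    simp only [Matrix.of_apply, Fin.succ_last, Fin.succ_castSucc, Fin.snoc_last,
      Fin.snoc_castSucc, h0]

end LastPoint

section VolumeForm

variable {m : ℕ} {A : Finset (EuclideanSpace ℝ (Fin (m + 1)))}

/-- The affine form `p ↦ ±(m+1)! vol(A ∪ {p})` of an `(m+1)`-set `A`, with the sign fixed by the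
enumeration of `A` chosen here; junk `0` if `#A ≠ m + 1`. -/
noncomputable def volumeForm (A : Finset (EuclideanSpace ℝ (Fin (m + 1)))) :
    (Fin (m + 1) → ℝ) × ℝ :=
  if h : A.card = m + 1 then detAffForm (Subtype.val ∘ (A.equivFinOfCardEq h).symm) else 0

theorem exists_volumeForm_eq_detAffForm (hA : A.card = m + 1) :
    ∃ a : Fin (m + 1) → EuclideanSpace ℝ (Fin (m + 1)),
      Set.range a = A ∧ volumeForm A = detAffForm a :=
  ⟨_, (A.equivFinOfCardEq hA).symm.surjective.range_comp _ ▸ Subtype.range_coe, dif_pos hA⟩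

theorem simplexVolume_insert (hA : A.card = m + 1) {p : EuclideanSpace ℝ (Fin (m + 1))}
    (hp : p ∉ A) :
    simplexVolume (insert p A) = |affineForm (volumeForm A) p| / (m + 1).factorial := by
  obtain ⟨a, ha, hform⟩ := exists_volumeForm_eq_detAffForm hA
  rw [simplexVolume_eq_of_range_eq (by rw [card_insert_of_notMem hp, hA])
    (by rw [Fin.range_snoc, ha, coe_insert]), detAff_snoc, hform]

theorem affineForm_volumeForm_of_mem (hA : A.card = m + 1)
    {q : EuclideanSpace ℝ (Fin (m + 1))} (hq : q ∈ A) : affineForm (volumeForm A) q = 0 := by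
  obtain ⟨a, ha, hform⟩ := exists_volumeForm_eq_detAffForm hA
  obtain ⟨i, rfl⟩ : q ∈ Set.range a := ha ▸ hq
  rw [hform, ← detAff_snoc, detAff_snoc_self]

end VolumeForm

def FewOnHyperplanes {d : ℕ} (P : Finset (EuclideanSpace ℝ (Fin d))) (t : ℕ) : Prop :=
  ∀ φ : (Fin d → ℝ) × ℝ, φ.1 ≠ 0 → (P.filter fun p => affineForm φ p = 0).card < t

namespace FewOnHyperplanes

variable {d t : ℕ} {P : Finset (EuclideanSpace ℝ (Fin d))}

theorem card_filter_lt (hP : FewOnHyperplanes P t) (ht : 0 < t) {φ : (Fin d → ℝ) × ℝ}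
    (hφ : φ ≠ 0) : (P.filter fun p => affineForm φ p = 0).card < t := by
  by_cases hφ₁ : φ.1 = 0
  · have hφ₂ : φ.2 ≠ 0 := fun h => hφ (Prod.ext hφ₁ h)
    rw [filter_false_of_mem fun p _ => by simpa [affineForm, hφ₁] using hφ₂]
    exact ht
  · exact hP φ hφ₁

theorem card_filter_abs_eq_lt (hP : FewOnHyperplanes P t) (ht : 0 < t)
    {φ ψ : (Fin d → ℝ) × ℝ} (hsub : φ ≠ ψ) (hadd : φ ≠ -ψ) :
    (P.filter fun p => |affineForm φ p| = |affineForm ψ p|).card < 2 * t := by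
  classical
  have hsplit : (P.filter fun p => |affineForm φ p| = |affineForm ψ p|) ⊆
      (P.filter fun p => affineForm (φ - ψ) p = 0) ∪
        (P.filter fun p => affineForm (φ + ψ) p = 0) := by
    intro p hp
    rw [mem_filter, abs_eq_abs] at hp
    rw [mem_union, mem_filter, mem_filter, affineForm_sub, affineForm_add, sub_eq_zero,
      add_eq_zero_iff_eq_neg]
    tauto
  calc _ ≤ _ := card_le_card hsplit
    _ ≤ _ := card_union_le _ _
    _ < t + t := add_lt_add (hP.card_filter_lt ht (sub_ne_zero.2 hsub))
        (hP.card_filter_lt ht fun h => hadd (eq_neg_of_add_eq_zero_left h))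
    _ = 2 * t := (two_mul t).symm

theorem exists_forall_abs_ne {ι : Type*} (hP : FewOnHyperplanes P t) (ht : 0 < t)
    (S : Finset (EuclideanSpace ℝ (Fin d))) (I : Finset ι) (φ ψ : ι → (Fin d → ℝ) × ℝ)
    (hφψ : ∀ i ∈ I, φ i ≠ ψ i ∧ φ i ≠ -ψ i) (hcard : S.card + 2 * t * I.card < P.card) :
    ∃ p ∈ P, p ∉ S ∧ ∀ i ∈ I, |affineForm (φ i) p| ≠ |affineForm (ψ i) p| := by
  classical
  let bad := S ∪ I.biUnion fun i => P.filter fun p => |affineForm (φ i) p| = |affineForm (ψ i) p|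
  have hbad : bad.card < P.card := by
    have hunion := card_biUnion_le_card_mul I
      (fun i => P.filter fun p => |affineForm (φ i) p| = |affineForm (ψ i) p|) (2 * t) fun i hi =>
        (hP.card_filter_abs_eq_lt ht (hφψ i hi).1 (hφψ i hi).2).le
    calc bad.card ≤ S.card + I.card * (2 * t) := (card_union_le _ _).trans (by omega)
      _ < P.card := by rwa [mul_comm]
  obtain ⟨p, hpP, hpbad⟩ := exists_mem_notMem_of_card_lt_card hbad
  simp only [bad, mem_union, mem_biUnion, mem_filter, not_or, not_exists, not_and] at hpbad
  exact ⟨p, hpP, hpbad.1, fun i hi => hpbad.2 i hi hpP⟩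

end FewOnHyperplanes

def HasDistinctNonzeroVolumes {d : ℕ} (S : Finset (EuclideanSpace ℝ (Fin d))) : Prop :=
  (∀ e ∈ powersetCard (d + 1) S, simplexVolume e ≠ 0) ∧
    Set.InjOn simplexVolume (powersetCard (d + 1) S : Set (Finset (EuclideanSpace ℝ (Fin d))))

theorem hasDistinctNonzeroVolumes_insert {d : ℕ} {S : Finset (EuclideanSpace ℝ (Fin d))}
    (hS : HasDistinctNonzeroVolumes S) {p : EuclideanSpace ℝ (Fin d)} (hp : p ∉ S)
    (h_ne_zero : ∀ A ∈ powersetCard d S, simplexVolume (insert p A) ≠ 0)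
    (h_ne_old : ∀ A ∈ powersetCard d S, ∀ e ∈ powersetCard (d + 1) S,
      simplexVolume (insert p A) ≠ simplexVolume e)
    (h_inj_new : Set.InjOn (fun A => simplexVolume (insert p A))
      (powersetCard d S : Set (Finset (EuclideanSpace ℝ (Fin d))))) :
    HasDistinctNonzeroVolumes (insert p S) := by
  classical
  have hdisj : Disjoint (powersetCard (d + 1) S : Set (Finset (EuclideanSpace ℝ (Fin d))))
      ((powersetCard d S).image (insert p) : Set _) := by
    refine Set.disjoint_right.2 fun e he he' => ?_
    obtain ⟨A, -, rfl⟩ := mem_image.1 he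
    exact hp ((mem_powersetCard.1 he').1 (mem_insert_self p A))
  rw [HasDistinctNonzeroVolumes, powersetCard_succ_insert hp, coe_union, Set.injOn_union hdisj,
    coe_image]
  refine ⟨fun e he => ?_, hS.2, Set.InjOn.image_of_comp (g := simplexVolume) h_inj_new,
    fun e he _ ⟨A, hA, hAe⟩ => ?_⟩
  · rcases mem_union.1 he with he | he
    · exact hS.1 e he
    · obtain ⟨A, hA, rfl⟩ := mem_image.1 he
      exact h_ne_zero A hA
  · exact hAe ▸ (h_ne_old A hA e he).symm

namespace HasDistinctNonzeroVolumes

variable {m : ℕ} {S A B : Finset (EuclideanSpace ℝ (Fin (m + 1)))}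

theorem affineForm_volumeForm_ne_zero (hS : HasDistinctNonzeroVolumes S)
    (hA : A ∈ powersetCard (m + 1) S) {q : EuclideanSpace ℝ (Fin (m + 1))} (hq : q ∈ S)
    (hqA : q ∉ A) : affineForm (volumeForm A) q ≠ 0 := by
  obtain ⟨hAS, hAcard⟩ := mem_powersetCard.1 hA
  have hvol := hS.1 (insert q A)
    (mem_powersetCard.2 ⟨insert_subset hq hAS, by rw [card_insert_of_notMem hqA, hAcard]⟩)
  rw [simplexVolume_insert hAcard hqA] at hvol
  exact abs_ne_zero.1 (left_ne_zero_of_mul hvol)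

theorem volumeForm_fst_ne_zero (hS : HasDistinctNonzeroVolumes S) (hcard : m + 2 ≤ S.card)
    (hA : A ∈ powersetCard (m + 1) S) : (volumeForm A).1 ≠ 0 := by
  have hAcard := (mem_powersetCard.1 hA).2
  obtain ⟨q, hq, hqA⟩ := exists_mem_notMem_of_card_lt_card (s := A) (t := S) (by omega)
  obtain ⟨a, ha⟩ := card_pos.1 (by omega : 0 < A.card)
  intro h
  have hconst : ∀ p, affineForm (volumeForm A) p = (volumeForm A).2 := by
    simp [affineForm, h]
  apply hS.affineForm_volumeForm_ne_zero hA hq hqA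
  rw [hconst, ← hconst a, affineForm_volumeForm_of_mem hAcard ha]

theorem volumeForm_ne (hS : HasDistinctNonzeroVolumes S) (hA : A ∈ powersetCard (m + 1) S)
    (hB : B ∈ powersetCard (m + 1) S) (hAB : A ≠ B) :
    volumeForm A ≠ volumeForm B ∧ volumeForm A ≠ -volumeForm B := by
  obtain ⟨hBS, hBcard⟩ := mem_powersetCard.1 hB
  obtain ⟨x, hxB, hxA⟩ := not_subset.1 fun hBA =>
    hAB (eq_of_subset_of_card_le hBA (by rw [hBcard, (mem_powersetCard.1 hA).2])).symm
  have hx := hS.affineForm_volumeForm_ne_zero hA (hBS hxB) hxA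
  have hxB₀ := affineForm_volumeForm_of_mem hBcard hxB
  refine ⟨fun h => hx (h ▸ hxB₀), fun h => hx ?_⟩
  rw [h, affineForm_neg, hxB₀, neg_zero]

end HasDistinctNonzeroVolumes

-- The affine forms whose absolute value at a new point must differ from that of every
-- `volumeForm A`: the constants `0` and `d! vol e`, and the other `volumeForm B`.
noncomputable def volumeTargets {m : ℕ} (S : Finset (EuclideanSpace ℝ (Fin (m + 1)))) :
    Finset ((Fin (m + 1) → ℝ) × ℝ) :=
  insert 0 ((powersetCard (m + 2) S).image fun e => (0, (m + 1).factorial * simplexVolume e)) ∪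
    (powersetCard (m + 1) S).image volumeForm

theorem card_volumeTargets_le {m : ℕ} (S : Finset (EuclideanSpace ℝ (Fin (m + 1)))) :
    (volumeTargets S).card ≤ 1 + S.card.choose (m + 2) + S.card.choose (m + 1) := by
  classical
  rw [← card_powersetCard, ← card_powersetCard, add_comm 1]
  exact (card_union_le _ _).trans (add_le_add ((card_insert_le _ _).trans
    (add_le_add_left card_image_le 1)) card_image_le)

theorem HasDistinctNonzeroVolumes.exists_forall_abs_ne {m t : ℕ}
    {P S : Finset (EuclideanSpace ℝ (Fin (m + 1)))} (hP : FewOnHyperplanes P t) (ht : 0 < t)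
    (hS : HasDistinctNonzeroVolumes S) (hcard : m + 2 ≤ S.card)
    (hbound : S.card + 2 * t * (S.card.choose (m + 1) *
      (1 + S.card.choose (m + 2) + S.card.choose (m + 1))) < P.card) :
    ∃ p ∈ P, p ∉ S ∧ ∀ A ∈ powersetCard (m + 1) S, ∀ ψ ∈ volumeTargets S, volumeForm A ≠ ψ →
      |affineForm (volumeForm A) p| ≠ |affineForm ψ p| := by
  classical
  let pairs := (powersetCard (m + 1) S ×ˢ volumeTargets S).filter fun x => volumeForm x.1 ≠ x.2
  have hpairs : ∀ x ∈ pairs, volumeForm x.1 ≠ x.2 ∧ volumeForm x.1 ≠ -x.2 := by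
    rintro ⟨A, ψ⟩ hx
    obtain ⟨hx, hne⟩ := mem_filter.1 hx
    obtain ⟨hA, hψ⟩ := mem_product.1 hx
    refine ⟨hne, fun h => ?_⟩
    rcases mem_union.1 hψ with hψ | hψ
    · have hψ₁ : ψ.1 = 0 := by
        rcases mem_insert.1 hψ with rfl | hψ
        · rfl
        · obtain ⟨e, -, rfl⟩ := mem_image.1 hψ
          rfl
      exact hS.volumeForm_fst_ne_zero hcard hA (by rw [h, Prod.fst_neg, hψ₁, neg_zero])
    · obtain ⟨B, hB, rfl⟩ := mem_image.1 hψ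
      exact (hS.volumeForm_ne hA hB fun h => hne (h ▸ rfl)).2 h
  have hpairs_card : pairs.card ≤ S.card.choose (m + 1) *
      (1 + S.card.choose (m + 2) + S.card.choose (m + 1)) := by
    calc pairs.card ≤ (powersetCard (m + 1) S).card * (volumeTargets S).card :=
          (card_filter_le _ _).trans (card_product _ _).le
      _ ≤ _ := by rw [card_powersetCard]; exact Nat.mul_le_mul_left _ (card_volumeTargets_le S)
  obtain ⟨p, hpP, hpS, hp⟩ := hP.exists_forall_abs_ne ht S pairs (volumeForm ·.1) (·.2) hpairs
    (lt_of_le_of_lt (by gcongr) hbound)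
  exact ⟨p, hpP, hpS, fun A hA ψ hψ hne => hp (A, ψ) (mem_filter.2 ⟨mem_product.2 ⟨hA, hψ⟩, hne⟩)⟩

theorem HasDistinctNonzeroVolumes.exists_insert {m t : ℕ}
    {P S : Finset (EuclideanSpace ℝ (Fin (m + 1)))} (hP : FewOnHyperplanes P t) (ht : 0 < t)
    (hS : HasDistinctNonzeroVolumes S) (hcard : m + 2 ≤ S.card)
    (hbound : S.card + 2 * t * (S.card.choose (m + 1) *
      (1 + S.card.choose (m + 2) + S.card.choose (m + 1))) < P.card) :
    ∃ p ∈ P, p ∉ S ∧ HasDistinctNonzeroVolumes (insert p S) := by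
  classical
  obtain ⟨p, hpP, hpS, hp⟩ := hS.exists_forall_abs_ne hP ht hcard hbound
  have hvol : ∀ A ∈ powersetCard (m + 1) S, simplexVolume (insert p A) =
      |affineForm (volumeForm A) p| / (m + 1).factorial := fun A hA =>
    simplexVolume_insert (mem_powersetCard.1 hA).2 fun hpA => hpS ((mem_powersetCard.1 hA).1 hpA)
  have hconst : ∀ A ∈ powersetCard (m + 1) S, ∀ r : ℝ, volumeForm A ≠ (0, r) := fun A hA r h =>
    hS.volumeForm_fst_ne_zero hcard hA (congrArg Prod.fst h)
  refine ⟨p, hpP, hpS, hasDistinctNonzeroVolumes_insert hS hpS (fun A hA => ?_)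
    (fun A hA e he => ?_) (fun A hA B hB hAB => ?_)⟩
  · have h := hp A hA (0, 0) (mem_union_left _ (mem_insert_self _ _)) (hconst A hA 0)
    rw [affineForm_zero_fst, abs_zero] at h
    rw [hvol A hA]
    exact div_ne_zero h (by positivity)
  · have h := hp A hA _ (mem_union_left _ (mem_insert_of_mem (mem_image_of_mem _ he)))
      (hconst A hA _)
    rw [affineForm_zero_fst,
      abs_of_nonneg (mul_nonneg (Nat.cast_nonneg _) (simplexVolume_nonneg e))] at h
    rw [hvol A hA, Ne, div_eq_iff (by positivity), mul_comm]
    exact h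
  · by_contra hne
    have h := hp A hA _ (mem_union_right _ (mem_image_of_mem _ hB)) (hS.volumeForm_ne hA hB hne).1
    exact h ((div_left_inj' (by positivity)).1
      ((hvol A hA).symm.trans (hAB.trans (hvol B hB))))

theorem add_two_mul_choose_lt {m s t : ℕ} (hst : s < t) :
    s + 2 * t * (s.choose (m + 1) * (1 + s.choose (m + 2) + s.choose (m + 1))) <
      8 * t ^ (2 * (m + 1) + 2) := by
  have ht : 1 ≤ t := by omega
  have hchoose : ∀ k, s.choose k ≤ t ^ k := fun k =>
    (Nat.choose_le_pow s k).trans (Nat.pow_le_pow_left hst.le k)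
  have hexpand : 2 * t * (t ^ (m + 1) * (1 + t ^ (m + 2) + t ^ (m + 1))) =
      2 * t ^ (m + 2) + 2 * t ^ (2 * (m + 1) + 2) + 2 * t ^ (2 * m + 3) := by ring
  have h₁ : t ≤ t ^ (2 * (m + 1) + 2) := Nat.le_self_pow (by omega) t
  have h₂ : t ^ (m + 2) ≤ t ^ (2 * (m + 1) + 2) := Nat.pow_le_pow_right ht (by omega)
  have h₃ : t ^ (2 * m + 3) ≤ t ^ (2 * (m + 1) + 2) := Nat.pow_le_pow_right ht (by omega)
  calc _ ≤ s + 2 * t * (t ^ (m + 1) * (1 + t ^ (m + 2) + t ^ (m + 1))) := by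
        gcongr <;> apply hchoose
    _ < _ := by omega

theorem FewOnHyperplanes.affineSpan_eq_top {d t : ℕ} {P : Finset (EuclideanSpace ℝ (Fin d))}
    (hP : FewOnHyperplanes P t) (ht : 0 < t) (hPt : t ≤ P.card) :
    affineSpan ℝ (P : Set (EuclideanSpace ℝ (Fin d))) = ⊤ := by
  by_contra hspan
  obtain ⟨p₀, hp₀⟩ := card_pos.1 (ht.trans_le hPt)
  obtain ⟨φ, hφ, hφP⟩ := exists_affineForm_of_affineSpan_ne_top hspan (mem_coe.2 hp₀)
  have := hP φ hφ
  rw [filter_true_of_mem fun p hp => hφP p (mem_coe.2 hp)] at this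
  omega

theorem hasDistinctNonzeroVolumes_of_card_eq {d : ℕ} {s : Finset (EuclideanSpace ℝ (Fin d))}
    (hs : s.card = d + 1) (hvol : simplexVolume s ≠ 0) : HasDistinctNonzeroVolumes s := by
  rw [HasDistinctNonzeroVolumes, ← hs, powersetCard_self, coe_singleton]
  exact ⟨fun e he => mem_singleton.1 he ▸ hvol, Set.injOn_singleton _ _⟩

theorem FewOnHyperplanes.exists_hasDistinctNonzeroVolumes {m t k : ℕ}
    {P : Finset (EuclideanSpace ℝ (Fin (m + 1)))} (hP : FewOnHyperplanes P t)
    (hPcard : 8 * t ^ (2 * (m + 1) + 2) ≤ P.card) (hk : m + 2 ≤ k) (hkt : k ≤ t) :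
    ∃ S ⊆ P, S.card = k ∧ HasDistinctNonzeroVolumes S := by
  have ht : 0 < t := by omega
  induction k, hk using Nat.le_induction with
  | base =>
    have hPt : t ≤ P.card := by
      have := Nat.le_self_pow (n := 2 * (m + 1) + 2) (by omega) t
      omega
    obtain ⟨e, heP, hecard, hvol⟩ := exists_simplexVolume_ne_zero (hP.affineSpan_eq_top ht hPt)
    exact ⟨e, heP, hecard, hasDistinctNonzeroVolumes_of_card_eq hecard hvol⟩
  | succ k hk ih =>
    obtain ⟨S, hSP, rfl, hS⟩ := ih (by omega)
    obtain ⟨p, hpP, hpS, hinsert⟩ := hS.exists_insert hP ht hk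
      ((add_two_mul_choose_lt (by omega)).trans_le hPcard)
    exact ⟨insert p S, insert_subset hpP hSP, card_insert_of_notMem hpS, hinsert⟩

theorem simplexVolume_eq_zero_of_affineForm_eq_zero {d : ℕ} {φ : (Fin d → ℝ) × ℝ}
    (hφ : φ.1 ≠ 0) {e : Finset (EuclideanSpace ℝ (Fin d))} (he : e.card = d + 1)
    (hφe : ∀ p ∈ e, affineForm φ p = 0) : simplexVolume e = 0 := by
  obtain ⟨f, hf⟩ : ∃ f : Fin (d + 1) → EuclideanSpace ℝ (Fin d), Set.range f = e :=
    ⟨_, (e.equivFinOfCardEq he).symm.surjective.range_comp _ ▸ Subtype.range_coe⟩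
  rw [simplexVolume_eq_of_range_eq he hf, detAff_eq_zero_of_affineForm_eq_zero hφ fun i =>
    hφe _ (mem_coe.1 (hf ▸ Set.mem_range_self i)), abs_zero, zero_div]

theorem stmt_8 (d t n : ℕ) (hd : 2 ≤ d) (ht : d + 1 ≤ t)
    (P : Finset (EuclideanSpace ℝ (Fin d))) (hP : P.card = n)
    (hn : 8 * t ^ (2 * d + 2) ≤ n) :
    ∃ S ⊆ P, t ≤ S.card ∧
      ∀ e₁ ∈ Finset.powersetCard (d + 1) S, ∀ e₂ ∈ Finset.powersetCard (d + 1) S,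
        simplexVolume e₁ ≠ 0 → simplexVolume e₂ ≠ 0 →
        simplexVolume e₁ = simplexVolume e₂ → e₁ = e₂ := by
  obtain ⟨m, rfl⟩ : ∃ m, d = m + 1 := ⟨d - 1, by omega⟩
  by_cases hfew : FewOnHyperplanes P t
  · obtain ⟨S, hSP, hScard, hS⟩ := hfew.exists_hasDistinctNonzeroVolumes (hP ▸ hn) ht le_rfl
    exact ⟨S, hSP, hScard.ge, fun e₁ he₁ e₂ he₂ _ _ h => hS.2 he₁ he₂ h⟩
  · obtain ⟨φ, hφ, hcard⟩ : ∃ φ : (Fin (m + 1) → ℝ) × ℝ, φ.1 ≠ 0 ∧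
        t ≤ (P.filter fun p => affineForm φ p = 0).card := by
      simpa [FewOnHyperplanes] using hfew
    refine ⟨_, filter_subset _ _, hcard, fun e₁ he₁ _ _ hvol₁ => (hvol₁ ?_).elim⟩
    obtain ⟨he₁S, he₁card⟩ := mem_powersetCard.1 he₁
    exact simplexVolume_eq_zero_of_affineForm_eq_zero hφ he₁card fun p hp =>
      (mem_filter.1 (he₁S hp)).2
end

section
/- If X ⊆ ℝ has |X| = n ≥ 32·t³, then X contains a subset S of size t such that all pairwise differences |x - y| for distinct x, y ∈ S are distinct. -/
def Good (S : Finset ℝ) : Prop :=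
  ∀ p ∈ S, ∀ q ∈ S, ∀ p' ∈ S, ∀ q' ∈ S,
    p ≠ q → p' ≠ q' → |p - q| = |p' - q'| → ({p, q} : Set ℝ) = {p', q'}

lemma key_step (z : ℝ) (S : Finset ℝ) (hzS : z ∉ S)
    (h2 : ∀ a ∈ S, ∀ b ∈ S, ∀ c ∈ S, |z - a| ≠ |b - c|)
    (h3 : ∀ a ∈ S, ∀ b ∈ S, a ≠ b → |z - a| ≠ |z - b|)
    (hG : Good S) : Good (insert z S) := by
  intro p hp q hq p' hp' q' hq' hpq hp'q' habs
  rw [Finset.mem_insert] at hp hq hp' hq'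
  rcases hp with rfl | hp <;> rcases hq with rfl | hq <;>
    rcases hp' with rfl | hp' <;> rcases hq' with rfl | hq'
  all_goals first
    | exact absurd rfl hpq
    | exact absurd rfl hp'q'
    | skip
  -- p = z, p' = z  (z ↦ p')
  · rcases eq_or_ne q q' with rfl | hne
    · rfl
    · exact absurd habs (h3 q hq q' hq' hne)
  -- p = z, q' = z  (z ↦ q')
  · rw [abs_sub_comm p' q'] at habs
    rcases eq_or_ne q p' with rfl | hne
    · exact Set.pair_comm q' q
    · exact absurd habs (h3 q hq p' hp' hne)
  -- p = z only  (z ↦ p)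
  · exact absurd habs (h2 q hq p' hp' q' hq')
  -- q = z, p' = z  (z ↦ p')
  · rw [abs_sub_comm p p'] at habs
    rcases eq_or_ne p q' with rfl | hne
    · exact Set.pair_comm p p'
    · exact absurd habs (h3 p hp q' hq' hne)
  -- q = z, q' = z  (z ↦ q')
  · rw [abs_sub_comm p q', abs_sub_comm p' q'] at habs
    rcases eq_or_ne p p' with rfl | hne
    · rfl
    · exact absurd habs (h3 p hp p' hp' hne)
  -- q = z only  (z ↦ q)
  · rw [abs_sub_comm p q] at habs
    exact absurd habs (h2 p hp p' hp' q' hq')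
  -- p' = z only  (z ↦ p')
  · exact absurd habs.symm (h2 q' hq' p hp q hq)
  -- q' = z only  (z ↦ q')
  · rw [abs_sub_comm p' q'] at habs
    exact absurd habs.symm (h2 p' hp' p hp q hq)
  -- all in S
  · exact hG p hp q hq p' hp' q' hq' hpq hp'q' habs

lemma grow (t : ℕ) (ht : 1 ≤ t) (X : Finset ℝ) (hn : 32 * t ^ 3 ≤ X.card) :
    ∀ s, s ≤ t → ∃ S ⊆ X, S.card = s ∧ Good S := by
  intro s
  induction s with
  | zero => intro _; exact ⟨∅, Finset.empty_subset X, rfl, by intro p hp; simp at hp⟩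
  | succ s ih =>
    intro hst
    obtain ⟨S, hSX, hcard, hG⟩ := ih (Nat.le_of_succ_le hst)
    set Bad : Finset ℝ :=
      (S ∪ (S ×ˢ S ×ˢ S).biUnion
        (fun x => {x.1 + |x.2.1 - x.2.2|, x.1 - |x.2.1 - x.2.2|})) ∪
        (S ×ˢ S).image (fun x => (x.1 + x.2) / 2) with hBad
    have hb1 : ((S ×ˢ S ×ˢ S).biUnion
        (fun x => ({x.1 + |x.2.1 - x.2.2|, x.1 - |x.2.1 - x.2.2|} : Finset ℝ))).card
        ≤ s ^ 3 * 2 := by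
      calc _ ≤ ∑ x ∈ S ×ˢ S ×ˢ S,
            ({x.1 + |x.2.1 - x.2.2|, x.1 - |x.2.1 - x.2.2|} : Finset ℝ).card :=
          Finset.card_biUnion_le
        _ ≤ (S ×ˢ S ×ˢ S).card * 2 := by
            apply Finset.sum_le_card_nsmul
            intro x _
            exact (Finset.card_insert_le _ _).trans (by simp)
        _ = s ^ 3 * 2 := by simp [Finset.card_product, hcard]; ring
    have hb2 : ((S ×ˢ S).image (fun x => (x.1 + x.2) / 2)).card ≤ s ^ 2 := by
      calc _ ≤ (S ×ˢ S).card := Finset.card_image_le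
        _ = s ^ 2 := by simp [Finset.card_product, hcard]; ring
    have hBcard : Bad.card < X.card := by
      have hb : Bad.card ≤ s + s ^ 3 * 2 + s ^ 2 := by
        calc Bad.card ≤ _ + _ := Finset.card_union_le _ _
          _ ≤ (S.card + _) + _ := by
              gcongr
              exact Finset.card_union_le _ _
          _ ≤ s + s ^ 3 * 2 + s ^ 2 := by
              rw [hcard]; gcongr
      have hst' : s < t := hst
      have e1 : s ^ 3 < t ^ 3 := Nat.pow_lt_pow_left hst' (by norm_num)
      have e2 : s ^ 2 < t ^ 2 := Nat.pow_lt_pow_left hst' (by norm_num)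
      have e3 : t ^ 2 ≤ t ^ 3 := Nat.pow_le_pow_right ht (by omega)
      have e4 : t ≤ t ^ 3 := Nat.le_self_pow (by omega) t
      omega
    have hz : ∃ z ∈ X, z ∉ Bad := by
      by_contra h
      push_neg at h
      exact absurd (Finset.card_le_card fun x hx => h x hx) (not_le.mpr hBcard)
    obtain ⟨z, hzX, hzB⟩ := hz
    rw [hBad] at hzB
    simp only [Finset.mem_union, Finset.mem_biUnion, Finset.mem_image,
      Finset.mem_product, Finset.mem_insert, Finset.mem_singleton, not_or,
      not_exists, not_and] at hzB
    obtain ⟨⟨hzS, hzU⟩, hzM⟩ := hzB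
    have h2 : ∀ a ∈ S, ∀ b ∈ S, ∀ c ∈ S, |z - a| ≠ |b - c| := by
      intro a ha b hb c hc h
      have hd : z - a = |b - c| ∨ z - a = -|b - c| := abs_eq (abs_nonneg _) |>.mp h
      have := hzU (a, b, c) ⟨ha, hb, hc⟩
      rcases hd with hd | hd
      · exact this.1 (by simp; linarith)
      · exact this.2 (by simp; linarith)
    have h3 : ∀ a ∈ S, ∀ b ∈ S, a ≠ b → |z - a| ≠ |z - b| := by
      intro a ha b hb hne h
      rcases abs_eq_abs.mp h with h | h
      · exact hne (by linarith)
      · exact hzM (a, b) ⟨ha, hb⟩ (by linarith)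
    refine ⟨insert z S, Finset.insert_subset hzX hSX, ?_, key_step z S hzS h2 h3 hG⟩
    rw [Finset.card_insert_of_notMem hzS, hcard]

theorem stmt_14 (t n : ℕ) (ht : 1 ≤ t) (X : Finset ℝ) (hX : X.card = n)
    (hn : 32 * t ^ 3 ≤ n) :
    ∃ S ⊆ X, t ≤ S.card ∧
      ∀ p ∈ S, ∀ q ∈ S, ∀ p' ∈ S, ∀ q' ∈ S,
        p ≠ q → p' ≠ q' → |p - q| = |p' - q'| →
          ({p, q} : Set ℝ) = {p', q'} := by
  obtain ⟨S, hSX, hcard, hG⟩ := grow t ht X (hX ▸ hn) t le_rfl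
  exact ⟨S, hSX, hcard.ge, hG⟩
end
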